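/- Let I : (0,1) → (0,1) be quasiconcave satisfying condition (★), and let ‖·‖_Y be an r.i. norm such that ‖H_I 1‖_Y < ∞ and T_I is bounded on Y' (there is C₀ > 0 with ‖T_I g‖_{Y'} ≤ C₀·‖g‖_{Y'} for all g ∈ M_+(0,1)). Then there exists C > 0 such that for every f ∈ M_+(0,1): ‖ t ↦ ∫_t^1 f(s)/I(s) ds ‖_Y ≤ C·‖ t ↦ ∫_t^1 f^*(s)/I(s) ds ‖_Y. Consequently, sup{ ‖H_I h‖_Y : h ∈ M_+(0,1), h^* = f^* } ≈ ‖H_I f^*‖_Y, with constants independent of f. -/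

import Mathlib

/-!
By Lorentz–Luxemburg duality, `‖H_I f‖_Y` is the supremum of `∫ H_I f · g` over the unit ball
of `Y'`, and Fubini turns this pairing into `∫ f · R_I g`. The Hardy–Littlewood inequality bounds
it by `∫ f^* (R_I g)^*`. Since `g^* ≤ T_I g`, `R_I g` is dominated by `R_I (T_I g)`, which
condition (★) makes nonincreasing up to the factor `1 + C`; hence its rearrangement at `t` is
controlled by its value at `t/2`, and a dilation gives
`∫ f^* (R_I g)^* ≲ ∫ f^* R_I (T_I g) = ∫ H_I f^* · T_I g ≤ ‖H_I f^*‖_Y ‖T_I g‖_{Y'}`.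
The boundedness of `T_I` on `Y'` finishes the first claim. The second follows from it, since
every `h` with `h^* = f^*`, including `f^*` itself, has `H_I h^* = H_I f^*`.
-/

open MeasureTheory Set Filter
open scoped ENNReal

noncomputable section

/-- The nonincreasing rearrangement of `f` over `(0,1)`. -/
def rearr (f : ℝ → ℝ≥0∞) (t : ℝ) : ℝ≥0∞ :=
  sInf {l : ℝ≥0∞ | volume {s ∈ Set.Ioo (0:ℝ) 1 | l < f s} ≤ ENNReal.ofReal t}

/-- The maximal nonincreasing rearrangement `f^{**}(t) = (1/t) ∫_0^t f^*(s) ds`. -/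
def dstar (f : ℝ → ℝ≥0∞) (t : ℝ) : ℝ≥0∞ :=
  (ENNReal.ofReal t)⁻¹ * ∫⁻ s in Set.Ioo (0:ℝ) t, rearr f s

/-- The `L¹(0,1)` norm. -/
def lOne (f : ℝ → ℝ≥0∞) : ℝ≥0∞ := ∫⁻ t in Set.Ioo (0:ℝ) 1, f t

/-- The norm of the Marcinkiewicz-type space `m_I`. -/
def mNorm (I : ℝ → ℝ) (f : ℝ → ℝ≥0∞) : ℝ≥0∞ :=
  ⨆ t ∈ Set.Ioo (0:ℝ) 1, ENNReal.ofReal (I t) * rearr f t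

/-- The norm of `m_Ĩ` where `Ĩ(t) = t / I(t)`. -/
def mNormTilde (I : ℝ → ℝ) (f : ℝ → ℝ≥0∞) : ℝ≥0∞ :=
  ⨆ t ∈ Set.Ioo (0:ℝ) 1, ENNReal.ofReal (t / I t) * rearr f t

/-- The supremum operator `S_I f(t) = (1/I(t)) sup_{0<s≤t} I(s) f^*(s)`. -/
def SI (I : ℝ → ℝ) (f : ℝ → ℝ≥0∞) : ℝ → ℝ≥0∞ := fun t =>
  (ENNReal.ofReal (I t))⁻¹ * ⨆ s ∈ Set.Ioc (0:ℝ) t, ENNReal.ofReal (I s) * rearr f s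

/-- The supremum operator `T_I f(t) = (I(t)/t) sup_{t≤s<1} (s/I(s)) f^*(s)`. -/
def TI (I : ℝ → ℝ) (f : ℝ → ℝ≥0∞) : ℝ → ℝ≥0∞ := fun t =>
  ENNReal.ofReal (I t / t) * ⨆ s ∈ Set.Ico t 1, ENNReal.ofReal (s / I s) * rearr f s

/-- `H_I f(t) = ∫_t^1 f(s)/I(s) ds`. -/
def HI (I : ℝ → ℝ) (f : ℝ → ℝ≥0∞) : ℝ → ℝ≥0∞ := fun t =>
  ∫⁻ s in Set.Ioo t 1, f s / ENNReal.ofReal (I s)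

/-- `R_I f(t) = (1/I(t)) ∫_0^t f(s) ds`. -/
def RI (I : ℝ → ℝ) (f : ℝ → ℝ≥0∞) : ℝ → ℝ≥0∞ := fun t =>
  (ENNReal.ofReal (I t))⁻¹ * ∫⁻ s in Set.Ioo (0:ℝ) t, f s

/-- `I : (0,1) → (0,1)` is quasiconcave: a nondecreasing bijection of `(0,1)` onto `(0,1)`
with `I(t)/t` nonincreasing, `I(0+) = 0` and `I(1-) = 1`. -/
def Quasiconcave (I : ℝ → ℝ) : Prop :=
  Set.BijOn I (Set.Ioo 0 1) (Set.Ioo 0 1) ∧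
  MonotoneOn I (Set.Ioo 0 1) ∧
  AntitoneOn (fun t => I t / t) (Set.Ioo 0 1) ∧
  Tendsto I (nhdsWithin 0 (Set.Ioo 0 1)) (nhds 0) ∧
  Tendsto I (nhdsWithin 1 (Set.Ioo 0 1)) (nhds 1)

/-- Condition (★): `∫_0^t I(s)/s ds ≲ I(t)`. -/
def StarCond (I : ℝ → ℝ) : Prop :=
  ∃ C : ℝ, 0 < C ∧ ∀ t ∈ Set.Ioo (0:ℝ) 1,
    ∫⁻ s in Set.Ioo (0:ℝ) t, ENNReal.ofReal (I s / s) ≤ ENNReal.ofReal (C * I t)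

/-- The average property: `∫_0^t ds/I(s) ≲ t/I(t)`. -/
def AvgProp (I : ℝ → ℝ) : Prop :=
  ∃ C : ℝ, 0 < C ∧ ∀ t ∈ Set.Ioo (0:ℝ) 1,
    ∫⁻ s in Set.Ioo (0:ℝ) t, ENNReal.ofReal (1 / I s) ≤ ENNReal.ofReal (C * (t / I t))

/-- The condition `∫_t^1 I(s)/s² ds ≲ (1/t) ∫_0^t I(s)/s ds`. -/
def MaxCond (I : ℝ → ℝ) : Prop :=
  ∃ C : ℝ, 0 < C ∧ ∀ t ∈ Set.Ioo (0:ℝ) 1,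
    ∫⁻ s in Set.Ioo t 1, ENNReal.ofReal (I s / s ^ 2) ≤
      ENNReal.ofReal (C / t) * ∫⁻ s in Set.Ioo (0:ℝ) t, ENNReal.ofReal (I s / s)

/-- The class `𝒬` of quasiconcave functions. -/
def ClassQ (I : ℝ → ℝ) : Prop :=
  Quasiconcave I ∧ StarCond I ∧ AvgProp I ∧ MaxCond I ∧
  ∃ c d : ℝ,
    IsLUB {l : ℝ | 0 ≤ l ∧ ∀ t ∈ Set.Ioo (0:ℝ) 1,
      ENNReal.ofReal (l * (I t / t ^ 2 - 1)) ≤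
        ∫⁻ s in Set.Ioo t 1, ENNReal.ofReal (I s / s ^ 3)} c ∧
    IsLeast {e : ℝ | 0 < e ∧ ∀ t ∈ Set.Ioo (0:ℝ) 1,
      ∫⁻ s in Set.Ioo t 1, ENNReal.ofReal (I s / s ^ 2) ≤
        ENNReal.ofReal (e * (I t / t))} d ∧
    (1 - c) * d ≤ c

/-- The `Δ₂` condition: `I(2t) ≤ C I(t)` for `t ∈ (0,1/2)`. -/
def Delta2 (I : ℝ → ℝ) : Prop :=
  ∃ C : ℝ, 0 < C ∧ ∀ t ∈ Set.Ioo (0:ℝ) (1/2), I (2 * t) ≤ C * I t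

/-- A rearrangement-invariant Banach function norm on `M₊(0,1)`. -/
def IsRiNorm (ρ : (ℝ → ℝ≥0∞) → ℝ≥0∞) : Prop :=
  (∀ f : ℝ → ℝ≥0∞, Measurable f →
      (ρ f = 0 ↔ f =ᵐ[volume.restrict (Set.Ioo (0:ℝ) 1)] 0)) ∧
  (∀ f : ℝ → ℝ≥0∞, Measurable f → ∀ a : ℝ, 0 ≤ a →
      ρ (fun t => ENNReal.ofReal a * f t) = ENNReal.ofReal a * ρ f) ∧
  (∀ f g : ℝ → ℝ≥0∞, Measurable f → Measurable g →
      ρ (fun t => f t + g t) ≤ ρ f + ρ g) ∧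
  (∀ f g : ℝ → ℝ≥0∞, Measurable f → Measurable g →
      (∀ᵐ t ∂(volume.restrict (Set.Ioo (0:ℝ) 1)), f t ≤ g t) → ρ f ≤ ρ g) ∧
  (∀ (fn : ℕ → ℝ → ℝ≥0∞) (f : ℝ → ℝ≥0∞), (∀ n, Measurable (fn n)) → Measurable f →
      (∀ᵐ t ∂(volume.restrict (Set.Ioo (0:ℝ) 1)), Monotone (fun n => fn n t)) →
      (∀ᵐ t ∂(volume.restrict (Set.Ioo (0:ℝ) 1)), (⨆ n, fn n t) = f t) →
      (⨆ n, ρ (fn n)) = ρ f) ∧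
  (ρ (fun _ => 1) < ⊤) ∧
  (∃ c : ℝ, 0 < c ∧ ∀ f : ℝ → ℝ≥0∞, Measurable f →
      ∫⁻ t in Set.Ioo (0:ℝ) 1, f t ≤ ENNReal.ofReal c * ρ f) ∧
  (∀ f : ℝ → ℝ≥0∞, Measurable f → ρ f = ρ (rearr f))

/-- The associate norm `ρ'`. -/
def assoc (ρ : (ℝ → ℝ≥0∞) → ℝ≥0∞) (f : ℝ → ℝ≥0∞) : ℝ≥0∞ :=
  ⨆ (g : ℝ → ℝ≥0∞) (_ : Measurable g ∧ ρ g ≤ 1),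
    ∫⁻ t in Set.Ioo (0:ℝ) 1, f t * g t

/-- The optimal target norm `‖f‖_{Y_X}` of the r.i. norm `ρ = ‖·‖_X` under `H_I`. -/
def optTargetNorm (I : ℝ → ℝ) (ρ : (ℝ → ℝ≥0∞) → ℝ≥0∞) (f : ℝ → ℝ≥0∞) : ℝ≥0∞ :=
  ⨆ (g : ℝ → ℝ≥0∞) (_ : Measurable g ∧ assoc ρ (RI I (rearr g)) ≤ 1),
    ∫⁻ t in Set.Ioo (0:ℝ) 1, rearr f t * rearr g t

/-- The optimal domain norm `‖f‖_{X_Y} = sup_{h ∼ f} ‖H_I h‖_Y`. -/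
def optDomainNorm (I : ℝ → ℝ) (ρY : (ℝ → ℝ≥0∞) → ℝ≥0∞) (f : ℝ → ℝ≥0∞) : ℝ≥0∞ :=
  ⨆ (h : ℝ → ℝ≥0∞)
    (_ : Measurable h ∧ ∀ t ∈ Set.Ioo (0:ℝ) 1, rearr h t = rearr f t),
      ρY (HI I h)

/-- `H_I : X → Y` boundedly. -/
def HIBounded (I : ℝ → ℝ) (ρX ρY : (ℝ → ℝ≥0∞) → ℝ≥0∞) : Prop :=
  ∃ C : ℝ, 0 < C ∧ ∀ f : ℝ → ℝ≥0∞, Measurable f →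
    ρY (HI I f) ≤ ENNReal.ofReal C * ρX f

/-- `X` is the optimal domain space for `Y` under `H_I`. -/
def IsOptimalDomain (I : ℝ → ℝ) (ρX ρY : (ℝ → ℝ≥0∞) → ℝ≥0∞) : Prop :=
  HIBounded I ρX ρY ∧
  ∀ ρZ : (ℝ → ℝ≥0∞) → ℝ≥0∞, IsRiNorm ρZ → HIBounded I ρZ ρY →
    ∃ C : ℝ, 0 < C ∧ ∀ f : ℝ → ℝ≥0∞, Measurable f →
      ρX f ≤ ENNReal.ofReal C * ρZ f

/-- `Y` is the optimal target space for `X` under `H_I`. -/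
def IsOptimalTarget (I : ℝ → ℝ) (ρX ρY : (ℝ → ℝ≥0∞) → ℝ≥0∞) : Prop :=
  HIBounded I ρX ρY ∧
  ∀ ρZ : (ℝ → ℝ≥0∞) → ℝ≥0∞, IsRiNorm ρZ → HIBounded I ρX ρZ →
    ∃ C : ℝ, 0 < C ∧ ∀ f : ℝ → ℝ≥0∞, Measurable f →
      ρZ f ≤ ENNReal.ofReal C * ρY f


local notation "μ₀" => volume.restrict (Ioo (0:ℝ) 1)

def distrib (f : ℝ → ℝ≥0∞) (a : ℝ≥0∞) : ℝ≥0∞ :=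
  volume {s ∈ Ioo (0:ℝ) 1 | a < f s}

lemma rearr_le_of_distrib_le {f : ℝ → ℝ≥0∞} {l : ℝ≥0∞} {t : ℝ}
    (h : distrib f l ≤ ENNReal.ofReal t) : rearr f t ≤ l :=
  sInf_le h

lemma distrib_antitone (f : ℝ → ℝ≥0∞) : Antitone (distrib f) :=
  fun _ _ hab => measure_mono fun _ hs => ⟨hs.1, hab.trans_lt hs.2⟩

lemma distrib_le_one (f : ℝ → ℝ≥0∞) (a : ℝ≥0∞) : distrib f a ≤ 1 :=
  (measure_mono fun _ hs => hs.1).trans_eq (by simp [Real.volume_Ioo])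

lemma distrib_top (f : ℝ → ℝ≥0∞) : distrib f ⊤ = 0 := by
  simp [distrib]

lemma distrib_le_distrib {f g : ℝ → ℝ≥0∞} (h : ∀ s ∈ Ioo (0:ℝ) 1, f s ≤ g s)
    (a : ℝ≥0∞) : distrib f a ≤ distrib g a :=
  measure_mono fun s hs => ⟨hs.1, hs.2.trans_le (h s hs.1)⟩

lemma distrib_eq_iSup (f : ℝ → ℝ≥0∞) (a : ℝ≥0∞) :
    distrib f a = ⨆ n : ℕ, distrib f (a + (n : ℝ≥0∞)⁻¹) := by
  have hunion : {s ∈ Ioo (0:ℝ) 1 | a < f s}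
      = ⋃ n : ℕ, {s ∈ Ioo (0:ℝ) 1 | a + (n : ℝ≥0∞)⁻¹ < f s} := by
    ext s
    simp only [mem_ofPred_eq, mem_iUnion]
    constructor
    · rintro ⟨hs, hlt⟩
      obtain ⟨n, hn⟩ := ENNReal.exists_inv_nat_lt (tsub_pos_of_lt hlt).ne'
      exact ⟨n, hs, lt_tsub_iff_left.mp hn⟩
    · rintro ⟨n, hs, hn⟩
      exact ⟨hs, le_self_add.trans_lt hn⟩
  have hmono : Monotone fun n : ℕ => {s ∈ Ioo (0:ℝ) 1 | a + (n : ℝ≥0∞)⁻¹ < f s} :=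
    fun n m hnm s hs => ⟨hs.1, lt_of_le_of_lt (add_le_add_right
      (ENNReal.inv_le_inv.mpr (by exact_mod_cast hnm)) a) hs.2⟩
  rw [distrib, hunion, hmono.directed_le.measure_iUnion]
  rfl

lemma lt_rearr_iff {f : ℝ → ℝ≥0∞} {a : ℝ≥0∞} {t : ℝ} :
    a < rearr f t ↔ ENNReal.ofReal t < distrib f a := by
  constructor
  · intro h
    by_contra! hd
    exact (rearr_le_of_distrib_le hd).not_gt h
  · intro h
    rw [distrib_eq_iSup, lt_iSup_iff] at h
    obtain ⟨n, hn⟩ := h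
    have ha : a ≠ ⊤ := by
      rintro rfl
      simp [distrib_top] at hn
    have hle : a + (n : ℝ≥0∞)⁻¹ ≤ rearr f t :=
      le_sInf fun l hl => by
        by_contra! hlt
        exact (hn.trans_le ((distrib_antitone f hlt.le).trans hl)).false
    exact (ENNReal.lt_add_right ha (by simp)).trans_le hle

lemma rearr_antitone (f : ℝ → ℝ≥0∞) : Antitone (rearr f) :=
  fun _ _ h => sInf_le_sInf fun _ hl => hl.trans (ENNReal.ofReal_le_ofReal h)

lemma measurable_rearr (f : ℝ → ℝ≥0∞) : Measurable (rearr f) :=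
  (rearr_antitone f).measurable

lemma rearr_le_rearr {f g : ℝ → ℝ≥0∞} (h : ∀ s ∈ Ioo (0:ℝ) 1, f s ≤ g s) (t : ℝ) :
    rearr f t ≤ rearr g t :=
  sInf_le_sInf fun l hl => (distrib_le_distrib h l).trans hl

lemma volume_setOf_ofReal_lt (D : ℝ≥0∞) :
    volume {t ∈ Ioo (0:ℝ) 1 | ENNReal.ofReal t < D} = min D 1 := by
  rcases eq_or_ne D ⊤ with rfl | hD
  · simp only [ENNReal.ofReal_lt_top, and_true, ofPred_mem_eq, Real.volume_Ioo]
    simp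
  have hset : {t ∈ Ioo (0:ℝ) 1 | ENNReal.ofReal t < D} = Ioo 0 (min 1 D.toReal) := by
    ext t
    simp only [mem_ofPred_eq, mem_Ioo, lt_min_iff]
    constructor
    · rintro ⟨⟨h0, h1⟩, hlt⟩
      exact ⟨h0, h1, (ENNReal.ofReal_lt_iff_lt_toReal h0.le hD).mp hlt⟩
    · rintro ⟨h0, h1, h2⟩
      exact ⟨⟨h0, h1⟩, (ENNReal.ofReal_lt_iff_lt_toReal h0.le hD).mpr h2⟩
  rw [hset, Real.volume_Ioo, sub_zero, ← ENNReal.ofReal_one, ← ENNReal.ofReal_toReal hD,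
    ← ENNReal.ofReal_min, ENNReal.toReal_ofReal ENNReal.toReal_nonneg, min_comm]

lemma distrib_rearr (f : ℝ → ℝ≥0∞) (a : ℝ≥0∞) :
    distrib (rearr f) a = min (distrib f a) 1 := by
  simp only [distrib, lt_rearr_iff]
  exact volume_setOf_ofReal_lt _

lemma rearr_rearr (f : ℝ → ℝ≥0∞) {t : ℝ} (ht : t ∈ Ioo (0:ℝ) 1) :
    rearr (rearr f) t = rearr f t := by
  have ht1 : ENNReal.ofReal t < 1 := ENNReal.ofReal_lt_one.mpr ht.2
  unfold rearr
  congr 1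
  ext l
  change distrib (rearr f) l ≤ _ ↔ distrib f l ≤ _
  rw [distrib_rearr, min_le_iff]
  exact ⟨fun h => h.resolve_right ht1.not_ge, Or.inl⟩

lemma setLIntegral_Ioi_ite_ofReal_lt (a : ℝ≥0∞) :
    ∫⁻ x in Ioi (0:ℝ), (if ENNReal.ofReal x < a then 1 else 0) = a := by
  have hms : MeasurableSet {x : ℝ | ENNReal.ofReal x < a} :=
    measurableSet_lt ENNReal.measurable_ofReal measurable_const
  have hind : (fun x : ℝ => if ENNReal.ofReal x < a then (1:ℝ≥0∞) else 0)
      = indicator {x : ℝ | ENNReal.ofReal x < a} (fun _ => 1) := by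
    ext x; simp [indicator_apply]
  rw [hind, lintegral_indicator hms, setLIntegral_one, Measure.restrict_apply hms]
  rcases eq_or_ne a ⊤ with rfl | ha
  · simp [Real.volume_Ioi]
  have : {x : ℝ | ENNReal.ofReal x < a} ∩ Ioi 0 = Ioo 0 a.toReal := by
    ext x
    simp only [mem_inter_iff, mem_ofPred_eq, mem_Ioi, mem_Ioo]
    exact ⟨fun h => ⟨h.2, (ENNReal.ofReal_lt_iff_lt_toReal h.2.le ha).mp h.1⟩,
      fun h => ⟨(ENNReal.ofReal_lt_iff_lt_toReal h.1.le ha).mpr h.2, h.1⟩⟩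
  rw [this, Real.volume_Ioo, sub_zero, ENNReal.ofReal_toReal ha]

lemma setLIntegral_Ioo_ite_one (P : ℝ → Prop) [DecidablePred P] (hP : MeasurableSet {s | P s}) :
    ∫⁻ s in Ioo (0:ℝ) 1, (if P s then 1 else 0) = volume {s ∈ Ioo (0:ℝ) 1 | P s} := by
  have hind : (fun s : ℝ => if P s then (1:ℝ≥0∞) else 0) = indicator {s | P s} (fun _ => 1) := by
    ext s; simp [indicator_apply]
  rw [hind, lintegral_indicator hP, setLIntegral_one, Measure.restrict_apply hP, inter_comm]
  rfl

lemma mul_eq_lintegral_Ioi_Ioi (a b : ℝ≥0∞) :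
    a * b = ∫⁻ x in Ioi (0:ℝ), ∫⁻ y in Ioi (0:ℝ),
      (if ENNReal.ofReal x < a ∧ ENNReal.ofReal y < b then 1 else 0) := by
  have hms : MeasurableSet {x : ℝ | ENNReal.ofReal x < a} :=
    measurableSet_lt ENNReal.measurable_ofReal measurable_const
  calc a * b = (∫⁻ x in Ioi (0:ℝ), if ENNReal.ofReal x < a then 1 else 0) * b := by
        rw [setLIntegral_Ioi_ite_ofReal_lt]
    _ = ∫⁻ x in Ioi (0:ℝ), (if ENNReal.ofReal x < a then 1 else 0) * b :=
        (lintegral_mul_const _ (measurable_const.ite hms measurable_const)).symm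
    _ = _ := by
        refine lintegral_congr fun x => ?_
        by_cases h : ENNReal.ofReal x < a
        · simp [h, setLIntegral_Ioi_ite_ofReal_lt]
        · simp [h]

lemma lintegral_mul_eq_lintegral_volume_superlevel {F G : ℝ → ℝ≥0∞} (hF : Measurable F)
    (hG : Measurable G) :
    ∫⁻ s in Ioo (0:ℝ) 1, F s * G s
      = ∫⁻ x in Ioi (0:ℝ), ∫⁻ y in Ioi (0:ℝ),
          volume {s ∈ Ioo (0:ℝ) 1 | ENNReal.ofReal x < F s ∧ ENNReal.ofReal y < G s} := by
  set P : ℝ → ℝ → ℝ → Prop := fun x y s => ENNReal.ofReal x < F s ∧ ENNReal.ofReal y < G s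
  have hP : ∀ x y, MeasurableSet {s | P x y s} := fun x y =>
    (hF measurableSet_Ioi).inter (hG measurableSet_Ioi)
  have hP₂ : ∀ x, Measurable (Function.uncurry fun s y => if P x y s then (1:ℝ≥0∞) else 0) :=
    fun x => Measurable.ite ((hF.comp measurable_fst measurableSet_Ioi).inter
      (measurableSet_lt (ENNReal.measurable_ofReal.comp measurable_snd)
        (hG.comp measurable_fst))) measurable_const measurable_const
  have hP₃ : Measurable (Function.uncurry fun s x => ∫⁻ y in Ioi (0:ℝ),
      if P x y s then (1:ℝ≥0∞) else 0) := by
    refine Measurable.lintegral_prod_right' (f := fun p : (ℝ × ℝ) × ℝ =>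
      if P p.1.2 p.2 p.1.1 then (1:ℝ≥0∞) else 0) (Measurable.ite ?_ measurable_const
        measurable_const)
    exact (measurableSet_lt (ENNReal.measurable_ofReal.comp (measurable_snd.comp measurable_fst))
      (hF.comp (measurable_fst.comp measurable_fst))).inter
      (measurableSet_lt (ENNReal.measurable_ofReal.comp measurable_snd)
        (hG.comp (measurable_fst.comp measurable_fst)))
  calc ∫⁻ s in Ioo (0:ℝ) 1, F s * G s
      = ∫⁻ s in Ioo (0:ℝ) 1, ∫⁻ x in Ioi (0:ℝ), ∫⁻ y in Ioi (0:ℝ),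
          (if P x y s then 1 else 0) := lintegral_congr fun s => mul_eq_lintegral_Ioi_Ioi _ _
    _ = ∫⁻ x in Ioi (0:ℝ), ∫⁻ s in Ioo (0:ℝ) 1, ∫⁻ y in Ioi (0:ℝ),
          (if P x y s then 1 else 0) := lintegral_lintegral_swap hP₃.aemeasurable
    _ = ∫⁻ x in Ioi (0:ℝ), ∫⁻ y in Ioi (0:ℝ), ∫⁻ s in Ioo (0:ℝ) 1,
          (if P x y s then 1 else 0) :=
        lintegral_congr fun x => lintegral_lintegral_swap (hP₂ x).aemeasurable
    _ = _ := lintegral_congr fun x => lintegral_congr fun y =>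
        setLIntegral_Ioo_ite_one (P x y) (hP x y)

lemma lintegral_mul_le_lintegral_rearr_mul_rearr {f w : ℝ → ℝ≥0∞} (hf : Measurable f)
    (hw : Measurable w) :
    ∫⁻ s in Ioo (0:ℝ) 1, f s * w s ≤ ∫⁻ s in Ioo (0:ℝ) 1, rearr f s * rearr w s := by
  rw [lintegral_mul_eq_lintegral_volume_superlevel hf hw,
    lintegral_mul_eq_lintegral_volume_superlevel (measurable_rearr f) (measurable_rearr w)]
  refine lintegral_mono fun x => lintegral_mono fun y => ?_
  have hset : {s ∈ Ioo (0:ℝ) 1 | ENNReal.ofReal x < rearr f s ∧ ENNReal.ofReal y < rearr w s}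
      = {s ∈ Ioo (0:ℝ) 1 | ENNReal.ofReal s
          < min (distrib f (ENNReal.ofReal x)) (distrib w (ENNReal.ofReal y))} := by
    simp only [lt_rearr_iff, lt_min_iff]
  rw [hset, volume_setOf_ofReal_lt, min_eq_left (min_le_of_left_le (distrib_le_one _ _))]
  exact le_min (measure_mono fun s hs => ⟨hs.1, hs.2.1⟩) (measure_mono fun s hs => ⟨hs.1, hs.2.2⟩)

lemma setLIntegral_Ioo_le_setLIntegral_rearr {g : ℝ → ℝ≥0∞} (hg : Measurable g) {s : ℝ}
    (hs : s ≤ 1) : ∫⁻ τ in Ioo (0:ℝ) s, g τ ≤ ∫⁻ τ in Ioo (0:ℝ) s, rearr g τ := by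
  set χ := indicator (Ioo (0:ℝ) s) fun _ => (1:ℝ≥0∞)
  have hχ : ∀ τ, 0 < τ → rearr χ τ ≤ χ τ := by
    intro τ hτ
    by_cases hτs : τ < s
    · rw [show χ τ = 1 from indicator_of_mem (show τ ∈ Ioo 0 s from ⟨hτ, hτs⟩) _]
      refine rearr_le_of_distrib_le (le_of_eq_of_le (measure_mono_null (fun τ' hτ' => ?_)
        measure_empty) zero_le)
      exact (hτ'.2.trans_le (indicator_le_self' (fun _ _ => zero_le) τ')).false
    · refine (rearr_le_of_distrib_le ?_).trans zero_le
      calc distrib χ 0 ≤ volume (Ioo (0:ℝ) s) :=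
            measure_mono fun τ' hτ' => by
              by_contra h
              simp [χ, indicator_of_notMem h] at hτ'
        _ ≤ ENNReal.ofReal τ := by
            rw [Real.volume_Ioo, sub_zero]; exact ENNReal.ofReal_le_ofReal (not_lt.mp hτs)
  have hrestrict : ∀ u : ℝ → ℝ≥0∞,
      ∫⁻ τ in Ioo (0:ℝ) 1, u τ * χ τ = ∫⁻ τ in Ioo (0:ℝ) s, u τ := by
    intro u
    have hmul : ∀ τ, u τ * χ τ = indicator (Ioo (0:ℝ) s) u τ := fun τ => by
      by_cases h : τ ∈ Ioo (0:ℝ) s <;> simp [χ, h]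
    simp_rw [hmul]
    rw [lintegral_indicator measurableSet_Ioo, Measure.restrict_restrict measurableSet_Ioo,
      inter_eq_left.mpr (Ioo_subset_Ioo_right hs)]
  calc ∫⁻ τ in Ioo (0:ℝ) s, g τ = ∫⁻ τ in Ioo (0:ℝ) 1, g τ * χ τ := (hrestrict g).symm
    _ ≤ ∫⁻ τ in Ioo (0:ℝ) 1, rearr g τ * rearr χ τ :=
        lintegral_mul_le_lintegral_rearr_mul_rearr hg
          (measurable_const.indicator measurableSet_Ioo)
    _ ≤ ∫⁻ τ in Ioo (0:ℝ) 1, rearr g τ * χ τ :=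
        setLIntegral_mono' measurableSet_Ioo fun τ hτ => mul_le_mul_right (hχ τ hτ.1) _
    _ = ∫⁻ τ in Ioo (0:ℝ) s, rearr g τ := hrestrict _

lemma rearr_le_mul_comp_half {F : ℝ → ℝ≥0∞} {K : ℝ≥0∞}
    (hF : ∀ s ∈ Ioo (0:ℝ) 1, ∀ σ ∈ Ioo (0:ℝ) 1, s ≤ σ → F σ ≤ K * F s)
    {t : ℝ} (ht : t ∈ Ioo (0:ℝ) 1) : rearr F t ≤ K * F (t / 2) := by
  have ht2 : t / 2 ∈ Ioo (0:ℝ) 1 := ⟨by linarith [ht.1], by linarith [ht.2]⟩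
  refine rearr_le_of_distrib_le ?_
  calc distrib F (K * F (t / 2)) ≤ volume (Ioo (0:ℝ) (t / 2)) := measure_mono fun τ hτ => by
        by_contra hτ'
        exact (hF _ ht2 τ hτ.1 (not_lt.mp fun h => hτ' ⟨hτ.1.1, h⟩)).not_gt hτ.2
    _ ≤ ENNReal.ofReal t := by
        rw [Real.volume_Ioo, sub_zero]; exact ENNReal.ofReal_le_ofReal (by linarith [ht.1])

lemma setLIntegral_comp_half_le {F : ℝ → ℝ≥0∞} (hF : Measurable F) :
    ∫⁻ t in Ioo (0:ℝ) 1, F (t / 2) ≤ 2 * ∫⁻ t in Ioo (0:ℝ) 1, F t := by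
  have hhalf : Measurable fun t : ℝ => t / 2 := measurable_id.div_const 2
  have hmap : Measure.map (fun t : ℝ => t / 2) μ₀
      = ((2:ℝ≥0∞) • volume).restrict (Ioo (0:ℝ) (1 / 2)) := by
    have hpre : (fun t : ℝ => t / 2) ⁻¹' Ioo (0:ℝ) (1 / 2) = Ioo (0:ℝ) 1 := by
      ext t
      simp only [mem_preimage, mem_Ioo]
      constructor <;> rintro ⟨h1, h2⟩ <;> constructor <;> linarith
    rw [← hpre, ← Measure.restrict_map hhalf measurableSet_Ioo]
    congr 1
    simp_rw [div_eq_inv_mul]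
    rw [Real.map_volume_mul_left (by norm_num : (2⁻¹:ℝ) ≠ 0)]
    norm_num
  rw [← lintegral_map hF hhalf, hmap, Measure.restrict_smul, lintegral_smul_measure]
  exact mul_le_mul_right (lintegral_mono' (Measure.restrict_mono
    (Ioo_subset_Ioo_right (by norm_num)) le_rfl) le_rfl) _

lemma setLIntegral_mul_comp_half_le {φ F : ℝ → ℝ≥0∞} (hφ : Antitone φ) (hF : Measurable F) :
    ∫⁻ t in Ioo (0:ℝ) 1, φ t * F (t / 2) ≤ 2 * ∫⁻ t in Ioo (0:ℝ) 1, φ t * F t :=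
  calc ∫⁻ t in Ioo (0:ℝ) 1, φ t * F (t / 2) ≤ ∫⁻ t in Ioo (0:ℝ) 1, φ (t / 2) * F (t / 2) :=
        setLIntegral_mono' measurableSet_Ioo fun t ht =>
          mul_le_mul_left (hφ (by linarith [ht.1])) _
    _ ≤ 2 * ∫⁻ t in Ioo (0:ℝ) 1, φ t * F t :=
        setLIntegral_comp_half_le (hφ.measurable.mul hF)

section RiNorm

variable {ρ : (ℝ → ℝ≥0∞) → ℝ≥0∞}

lemma IsRiNorm.congr_ae (hρ : IsRiNorm ρ) {f g : ℝ → ℝ≥0∞} (hf : Measurable f)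
    (hg : Measurable g) (h : f =ᵐ[μ₀] g) : ρ f = ρ g :=
  le_antisymm (hρ.2.2.2.1 f g hf hg h.le) (hρ.2.2.2.1 g f hg hf h.symm.le)

lemma IsRiNorm.zero (hρ : IsRiNorm ρ) : ρ (fun _ => 0) = 0 :=
  (hρ.1 _ measurable_const).mpr (EventuallyEq.refl _ _)

lemma IsRiNorm.exists_const_le_one (hρ : IsRiNorm ρ) :
    ∃ a : ℝ, 0 < a ∧ ρ (fun _ => ENNReal.ofReal a) ≤ 1 := by
  have h1 : ρ (fun _ => 1) ≠ ⊤ := hρ.2.2.2.2.2.1.ne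
  have h0 : ρ (fun _ => 1) ≠ 0 := fun h => by
    have := lintegral_congr_ae ((hρ.1 _ measurable_const).mp h)
    simp [Real.volume_Ioo] at this
  have hpos : 0 < (ρ fun _ => 1).toReal := ENNReal.toReal_pos h0 h1
  refine ⟨(ρ fun _ => 1).toReal⁻¹, inv_pos.mpr hpos, le_of_eq ?_⟩
  have := hρ.2.1 (fun _ => 1) measurable_const _ (inv_pos.mpr hpos).le
  simp only [mul_one] at this
  rw [this, ENNReal.ofReal_inv_of_pos hpos, ENNReal.ofReal_toReal h1, ENNReal.inv_mul_cancel h0 h1]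

lemma lintegral_mul_le_assoc {v g : ℝ → ℝ≥0∞} (hg : Measurable g) (hg1 : ρ g ≤ 1) :
    ∫⁻ t in Ioo (0:ℝ) 1, v t * g t ≤ assoc ρ v :=
  le_iSup₂ (f := fun (g : ℝ → ℝ≥0∞) (_ : Measurable g ∧ ρ g ≤ 1) =>
    ∫⁻ t in Ioo (0:ℝ) 1, v t * g t) g ⟨hg, hg1⟩

lemma assoc_mono {u₁ u₂ : ℝ → ℝ≥0∞} (h : ∀ t, u₁ t ≤ u₂ t) : assoc ρ u₁ ≤ assoc ρ u₂ :=
  iSup₂_le fun g hg => (lintegral_mono fun t => mul_le_mul_left (h t) (g t)).trans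
    (lintegral_mul_le_assoc hg.1 hg.2)

lemma assoc_const_mul_le (k : ℝ≥0∞) {v : ℝ → ℝ≥0∞} (hv : Measurable v) :
    assoc ρ (fun t => k * v t) ≤ k * assoc ρ v :=
  iSup₂_le fun g hg => by
    simp_rw [mul_assoc]
    rw [lintegral_const_mul k (f := fun t => v t * g t) (hv.mul hg.1)]
    exact mul_le_mul_right (lintegral_mul_le_assoc hg.1 hg.2) k

lemma assoc_congr {v₁ v₂ : ℝ → ℝ≥0∞} (h : EqOn v₁ v₂ (Ioo (0:ℝ) 1)) :
    assoc ρ v₁ = assoc ρ v₂ := by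
  unfold assoc
  refine iSup_congr fun g => iSup_congr fun _ => ?_
  exact setLIntegral_congr_fun measurableSet_Ioo fun t ht => by rw [h ht]

lemma IsRiNorm.ae_eq_zero_of_assoc_eq_zero (hρ : IsRiNorm ρ) {v : ℝ → ℝ≥0∞}
    (hv : Measurable v) (h : assoc ρ v = 0) : v =ᵐ[μ₀] 0 := by
  obtain ⟨a, ha, hle⟩ := hρ.exists_const_le_one
  have hint : ∫⁻ t in Ioo (0:ℝ) 1, v t * ENNReal.ofReal a = 0 :=
    le_antisymm (h ▸ lintegral_mul_le_assoc measurable_const hle) zero_le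
  filter_upwards [(lintegral_eq_zero_iff (hv.mul_const _)).mp hint] with t ht
  simpa [not_le.mpr ha] using ht

lemma IsRiNorm.lintegral_mul_le (hρ : IsRiNorm ρ) {u v : ℝ → ℝ≥0∞} (hu : Measurable u)
    (hv : Measurable v) : ∫⁻ t in Ioo (0:ℝ) 1, u t * v t ≤ ρ u * assoc ρ v := by
  have hzero : (fun t => u t * v t) =ᵐ[μ₀] 0 →
      ∫⁻ t in Ioo (0:ℝ) 1, u t * v t ≤ ρ u * assoc ρ v := fun h => by
    rw [lintegral_congr_ae h]; simp
  rcases eq_or_ne (ρ u) 0 with h0 | h0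
  · refine hzero ?_
    filter_upwards [(hρ.1 u hu).mp h0] with t ht
    simp [ht]
  rcases eq_or_ne (ρ u) ⊤ with htop | htop
  · rcases eq_or_ne (assoc ρ v) 0 with hv0 | hv0
    · refine hzero ?_
      filter_upwards [hρ.ae_eq_zero_of_assoc_eq_zero hv hv0] with t ht
      simp [ht]
    · rw [htop, ENNReal.top_mul hv0]; exact le_top
  set a := (ρ u).toReal
  have ha : 0 < a := ENNReal.toReal_pos h0 htop
  have hg : ρ (fun t => ENNReal.ofReal a⁻¹ * u t) ≤ 1 := by
    rw [hρ.2.1 u hu _ (inv_pos.mpr ha).le, ENNReal.ofReal_inv_of_pos ha,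
      ENNReal.ofReal_toReal htop, ENNReal.inv_mul_cancel h0 htop]
  calc ∫⁻ t in Ioo (0:ℝ) 1, u t * v t
      = ENNReal.ofReal a * ∫⁻ t in Ioo (0:ℝ) 1, v t * (ENNReal.ofReal a⁻¹ * u t) := by
        rw [← lintegral_const_mul _ (f := fun t => v t * (ENNReal.ofReal a⁻¹ * u t))
          (hv.mul (hu.const_mul _))]
        refine lintegral_congr fun t => ?_
        rw [mul_comm (v t), ← mul_assoc, ← mul_assoc, ← ENNReal.ofReal_mul ha.le,
          mul_inv_cancel₀ ha.ne', ENNReal.ofReal_one, one_mul]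
    _ ≤ ENNReal.ofReal a * assoc ρ v :=
        mul_le_mul_right (lintegral_mul_le_assoc (hu.const_mul _) hg) _
    _ = ρ u * assoc ρ v := by rw [ENNReal.ofReal_toReal htop]

end RiNorm

lemma iSup_min_natCast (a : ℝ≥0∞) : ⨆ n : ℕ, min a (n : ℝ≥0∞) = a := by
  rw [← inf_iSup_eq, ENNReal.iSup_natCast, inf_top_eq]

lemma ofReal_integral_le_lintegral_ofReal {α : Type*} [MeasurableSpace α] {μ : Measure α}
    (f : α → ℝ) : ENNReal.ofReal (∫ a, f a ∂μ) ≤ ∫⁻ a, ENNReal.ofReal (f a) ∂μ := by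
  by_cases hf : Integrable f μ
  · rw [integral_eq_lintegral_pos_part_sub_lintegral_neg_part hf]
    exact (ENNReal.ofReal_le_ofReal (sub_le_self _ ENNReal.toReal_nonneg)).trans
      ENNReal.ofReal_toReal_le
  · simp [integral_undef hf]

lemma exists_Lp_two_separating {α : Type*} [MeasurableSpace α] {μ : Measure α}
    {S : Set (Lp ℝ 2 μ)} (hS : Convex ℝ S) (hSc : IsClosed S) {x : Lp ℝ 2 μ} (hx : x ∉ S) :
    ∃ (w : Lp ℝ 2 μ) (c : ℝ), (∀ y ∈ S, ∫ t, w t * y t ∂μ < c) ∧ c < ∫ t, w t * x t ∂μ := by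
  obtain ⟨f, c, hsep, hcx⟩ := geometric_hahn_banach_closed_point hS hSc hx
  set w := (InnerProductSpace.toDual ℝ (Lp ℝ 2 μ)).symm f
  have hf : ∀ y, f y = ∫ t, w t * y t ∂μ := fun y => by
    rw [← InnerProductSpace.toDual_symm_apply, L2.inner_def]
    simp [w, mul_comm]
  exact ⟨w, c, fun y hy => hf y ▸ hsep y hy, hf x ▸ hcx⟩

section LorentzLuxemburg

variable {ρ : (ℝ → ℝ≥0∞) → ℝ≥0∞}

lemma IsRiNorm.le_liminf (hρ : IsRiNorm ρ) {un : ℕ → ℝ → ℝ≥0∞} (hun : ∀ n, Measurable (un n))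
    {u : ℝ → ℝ≥0∞} (hu : Measurable u)
    (h : ∀ᵐ t ∂μ₀, Tendsto (fun n => un n t) atTop (nhds (u t))) :
    ρ u ≤ liminf (fun n => ρ (un n)) atTop := by
  set vn := fun (n : ℕ) (t : ℝ) => ⨅ k : ℕ, un (k + n) t
  have hvn : ∀ n, Measurable (vn n) := fun n => Measurable.iInf fun k => hun (k + n)
  have hmono : ∀ t, Monotone fun n => vn n t := fun t n m hnm =>
    le_iInf fun k => (iInf_le _ (k + (m - n))).trans_eq (by rw [add_assoc, Nat.sub_add_cancel hnm])
  have hsup : ∀ᵐ t ∂μ₀, (⨆ n, vn n t) = u t := by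
    filter_upwards [h] with t ht
    rw [← ht.liminf_eq, liminf_eq_iSup_iInf_of_nat']
  rw [← hρ.2.2.2.2.1 vn u hvn hu (Eventually.of_forall hmono) hsup,
    liminf_eq_iSup_iInf_of_nat']
  exact iSup_mono fun n => le_iInf fun k =>
    hρ.2.2.2.1 _ _ (hvn n) (hun (k + n)) (Eventually.of_forall fun t => iInf_le _ k)

def posUnitBallL2 (ρ : (ℝ → ℝ≥0∞) → ℝ≥0∞) : Set (Lp ℝ 2 μ₀) :=
  {y | (∀ᵐ t ∂μ₀, 0 ≤ y t) ∧ ρ (fun t => ENNReal.ofReal (y t)) ≤ 1}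

lemma measurable_ofReal_Lp (y : Lp ℝ 2 μ₀) : Measurable fun t => ENNReal.ofReal (y t) :=
  ENNReal.measurable_ofReal.comp (Lp.stronglyMeasurable y).measurable

lemma IsRiNorm.convex_posUnitBallL2 (hρ : IsRiNorm ρ) : Convex ℝ (posUnitBallL2 ρ) := by
  intro y₁ h₁ y₂ h₂ a b ha hb hab
  have hcoe : ⇑(a • y₁ + b • y₂) =ᵐ[μ₀] fun t => a * y₁ t + b * y₂ t := by
    filter_upwards [Lp.coeFn_add (a • y₁) (b • y₂), Lp.coeFn_smul a y₁, Lp.coeFn_smul b y₂]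
      with t hadd hs₁ hs₂
    simp only [hadd, Pi.add_apply, hs₁, hs₂, Pi.smul_apply, smul_eq_mul]
  refine ⟨?_, ?_⟩
  · filter_upwards [hcoe, h₁.1, h₂.1] with t hct h₁t h₂t
    rw [hct]
    positivity
  have hm : Measurable fun t => ENNReal.ofReal a * ENNReal.ofReal (y₁ t)
      + ENNReal.ofReal b * ENNReal.ofReal (y₂ t) :=
    ((measurable_ofReal_Lp y₁).const_mul _).add ((measurable_ofReal_Lp y₂).const_mul _)
  rw [hρ.congr_ae (measurable_ofReal_Lp _) hm (by
    filter_upwards [hcoe, h₁.1, h₂.1] with t hct h₁t h₂t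
    rw [hct, ENNReal.ofReal_add (by positivity) (by positivity),
      ENNReal.ofReal_mul ha, ENNReal.ofReal_mul hb])]
  calc _ ≤ ρ (fun t => ENNReal.ofReal a * ENNReal.ofReal (y₁ t))
        + ρ (fun t => ENNReal.ofReal b * ENNReal.ofReal (y₂ t)) :=
        hρ.2.2.1 _ _ ((measurable_ofReal_Lp y₁).const_mul _)
          ((measurable_ofReal_Lp y₂).const_mul _)
    _ ≤ ENNReal.ofReal a * 1 + ENNReal.ofReal b * 1 := by
        rw [hρ.2.1 _ (measurable_ofReal_Lp y₁) a ha, hρ.2.1 _ (measurable_ofReal_Lp y₂) b hb]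
        exact add_le_add (mul_le_mul_right h₁.2 _) (mul_le_mul_right h₂.2 _)
    _ = 1 := by rw [mul_one, mul_one, ← ENNReal.ofReal_add ha hb, hab, ENNReal.ofReal_one]

lemma IsRiNorm.isClosed_posUnitBallL2 (hρ : IsRiNorm ρ) : IsClosed (posUnitBallL2 ρ) := by
  refine IsSeqClosed.isClosed fun {yn y} hyn hlim => ?_
  have hmeas : TendstoInMeasure μ₀ (fun n => ⇑(yn n)) atTop ⇑y := by
    refine tendstoInMeasure_of_tendsto_eLpNorm (p := 2) two_ne_zero
      (fun n => (Lp.aestronglyMeasurable (yn n))) (Lp.aestronglyMeasurable y) ?_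
    have hnorm : ∀ n, eLpNorm (⇑(yn n) - ⇑y) 2 μ₀ = ENNReal.ofReal ‖yn n - y‖ := fun n => by
      rw [Lp.norm_def, ENNReal.ofReal_toReal (Lp.eLpNorm_ne_top _)]
      exact (eLpNorm_congr_ae (Lp.coeFn_sub _ _)).symm
    simp_rw [hnorm]
    simpa using ENNReal.tendsto_ofReal (tendsto_iff_norm_sub_tendsto_zero.mp hlim)
  obtain ⟨ns, -, hae⟩ := hmeas.exists_seq_tendsto_ae
  refine ⟨?_, ?_⟩
  · filter_upwards [hae, ae_all_iff.mpr fun i => (hyn (ns i)).1] with t ht hpos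
    exact ge_of_tendsto ht (Eventually.of_forall hpos)
  calc ρ (fun t => ENNReal.ofReal (y t))
      ≤ liminf (fun i => ρ fun t => ENNReal.ofReal (yn (ns i) t)) atTop :=
        hρ.le_liminf (fun i => measurable_ofReal_Lp _) (measurable_ofReal_Lp y) (by
          filter_upwards [hae] with t ht
          exact ENNReal.tendsto_ofReal ht)
    _ ≤ liminf (fun _ : ℕ => (1:ℝ≥0∞)) atTop :=
        liminf_le_liminf (Eventually.of_forall fun i => (hyn (ns i)).2)
    _ = 1 := liminf_const 1

lemma exists_Lp_two_ae_eq_toReal {v : ℝ → ℝ≥0∞} (hv : Measurable v) {B : ℝ≥0∞} (hB : B ≠ ⊤)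
    (hvB : ∀ t, v t ≤ B) : ∃ x : Lp ℝ 2 μ₀, ∀ᵐ t ∂μ₀, x t = (v t).toReal := by
  have hL : MemLp (fun t => (v t).toReal) 2 μ₀ :=
    MemLp.of_bound hv.ennreal_toReal.aestronglyMeasurable B.toReal
      (Eventually.of_forall fun t => by
        rw [Real.norm_of_nonneg ENNReal.toReal_nonneg]; exact ENNReal.toReal_mono hB (hvB t))
  exact ⟨hL.toLp _, hL.coeFn_toLp⟩

lemma IsRiNorm.lintegral_mul_ofReal_le_of_bounded (hρ : IsRiNorm ρ) {w : Lp ℝ 2 μ₀} {c : ℝ}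
    (hw : ∀ y ∈ posUnitBallL2 ρ, ∫ t, w t * y t ∂μ₀ < c) {b : ℝ → ℝ≥0∞} (hb : Measurable b)
    (hb1 : ρ b ≤ 1) {B : ℝ≥0∞} (hB : B ≠ ⊤) (hbB : ∀ t, b t ≤ B)
    (hsupp : ∀ t, w t ≤ 0 → b t = 0) :
    ∫⁻ t in Ioo (0:ℝ) 1, b t * ENNReal.ofReal (w t) ≤ ENNReal.ofReal c := by
  obtain ⟨x, hx⟩ := exists_Lp_two_ae_eq_toReal hb hB hbB
  have hofReal : ∀ t, ENNReal.ofReal (b t).toReal = b t := fun t =>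
    ENNReal.ofReal_toReal ((hbB t).trans_lt hB.lt_top).ne
  have hball : x ∈ posUnitBallL2 ρ := by
    refine ⟨hx.mono fun t ht => ht ▸ ENNReal.toReal_nonneg, ?_⟩
    rwa [hρ.congr_ae (measurable_ofReal_Lp _) hb (hx.mono fun t ht => by simp only [ht, hofReal])]
  have hnonneg : ∀ t, 0 ≤ w t * (b t).toReal := fun t => by
    rcases le_or_gt (w t) 0 with h | h
    · simp [hsupp t h]
    · exact mul_nonneg h.le ENNReal.toReal_nonneg
  have hint : Integrable (fun t => w t * (b t).toReal) μ₀ :=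
    ((Lp.memLp w).integrable one_le_two).mul_bdd hb.ennreal_toReal.aestronglyMeasurable
      (Eventually.of_forall fun t => by
        rw [Real.norm_of_nonneg ENNReal.toReal_nonneg]; exact ENNReal.toReal_mono hB (hbB t))
  calc ∫⁻ t in Ioo (0:ℝ) 1, b t * ENNReal.ofReal (w t)
      = ENNReal.ofReal (∫ t, w t * (b t).toReal ∂μ₀) := by
        rw [ofReal_integral_eq_lintegral_ofReal hint (Eventually.of_forall hnonneg)]
        refine lintegral_congr fun t => ?_
        rw [ENNReal.ofReal_mul' ENNReal.toReal_nonneg, hofReal, mul_comm]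
    _ ≤ ENNReal.ofReal c := ENNReal.ofReal_le_ofReal
        ((integral_congr_ae (hx.mono fun t ht => by simp only [ht])).symm.trans_lt
          (hw x hball)).le

lemma IsRiNorm.assoc_ofReal_le (hρ : IsRiNorm ρ) {w : Lp ℝ 2 μ₀} {c : ℝ}
    (hw : ∀ y ∈ posUnitBallL2 ρ, ∫ t, w t * y t ∂μ₀ < c) :
    assoc ρ (fun t => ENNReal.ofReal (w t)) ≤ ENNReal.ofReal c := by
  refine iSup₂_le fun b ⟨hb, hb1⟩ => (lintegral_congr fun t => mul_comm _ _).trans_le ?_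
  have hwm : Measurable ⇑w := (Lp.stronglyMeasurable w).measurable
  set E := {t | 0 < w t}
  have hE : MeasurableSet E := measurableSet_lt measurable_const hwm
  set bn := fun (n : ℕ) => E.indicator fun t => min (b t) (n : ℝ≥0∞)
  have hbn : ∀ n, Measurable (bn n) := fun n => (hb.min measurable_const).indicator hE
  have hbn_le : ∀ n t, bn n t ≤ min (b t) n := fun n t =>
    indicator_le_self' (fun _ _ => zero_le) t
  have hsup : ∀ t, b t * ENNReal.ofReal (w t) = ⨆ n, bn n t * ENNReal.ofReal (w t) := by
    intro t
    by_cases ht : t ∈ E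
    · simp only [bn, indicator_of_mem ht]
      rw [← ENNReal.iSup_mul, iSup_min_natCast]
    · simp [ENNReal.ofReal_eq_zero.mpr (not_lt.mp ht)]
  have hmono : Monotone fun n t => bn n t * ENNReal.ofReal (w t) := fun n m hnm t =>
    mul_le_mul_left (show bn n t ≤ bn m t from
      indicator_le_indicator (min_le_min le_rfl (Nat.cast_le.mpr hnm))) _
  rw [lintegral_congr hsup, lintegral_iSup (f := fun n t => bn n t * ENNReal.ofReal (w t))
    (fun n => (hbn n).mul hwm.ennreal_ofReal) hmono]
  exact iSup_le fun n => hρ.lintegral_mul_ofReal_le_of_bounded hw (hbn n)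
    ((hρ.2.2.2.1 _ _ (hbn n) hb (Eventually.of_forall fun t =>
      (hbn_le n t).trans (min_le_left _ _))).trans hb1)
    (ENNReal.natCast_ne_top n) (fun t => (hbn_le n t).trans (min_le_right _ _))
    (fun t ht => indicator_of_notMem (show t ∉ E from not_lt.mpr ht) _)

lemma IsRiNorm.zero_mem_posUnitBallL2 (hρ : IsRiNorm ρ) : 0 ∈ posUnitBallL2 ρ := by
  have h0 : (fun t => ENNReal.ofReal ((0 : Lp ℝ 2 μ₀) t)) =ᵐ[μ₀] fun _ => 0 := by
    filter_upwards [Lp.coeFn_zero ℝ 2 μ₀] with t ht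
    simp only [ht, Pi.zero_apply, ENNReal.ofReal_zero]
  refine ⟨?_, ?_⟩
  · filter_upwards [Lp.coeFn_zero ℝ 2 μ₀] with t ht
    simp only [ht, Pi.zero_apply, le_refl]
  · rw [hρ.congr_ae (measurable_ofReal_Lp _) measurable_const h0, hρ.zero]
    exact zero_le_one

lemma IsRiNorm.one_lt_assoc_assoc (hρ : IsRiNorm ρ) {v : ℝ → ℝ≥0∞} (hv : Measurable v)
    {B : ℝ≥0∞} (hB : B ≠ ⊤) (hvB : ∀ t, v t ≤ B) (h : 1 < ρ v) : 1 < assoc (assoc ρ) v := by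
  obtain ⟨x, hx⟩ := exists_Lp_two_ae_eq_toReal hv hB hvB
  have hofReal : ∀ t, ENNReal.ofReal (v t).toReal = v t := fun t =>
    ENNReal.ofReal_toReal ((hvB t).trans_lt hB.lt_top).ne
  have hxS : x ∉ posUnitBallL2 ρ := fun hxS => by
    refine (hxS.2.trans_lt' ?_).false
    rwa [hρ.congr_ae (measurable_ofReal_Lp _) hv (hx.mono fun t ht => by simp only [ht, hofReal])]
  obtain ⟨w, c, hsep, hcx⟩ :=
    exists_Lp_two_separating hρ.convex_posUnitBallL2 hρ.isClosed_posUnitBallL2 hxS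
  have hc : 0 < c := by
    have h0 : (fun t => w t * (0 : Lp ℝ 2 μ₀) t) =ᵐ[μ₀] 0 := by
      filter_upwards [Lp.coeFn_zero ℝ 2 μ₀] with t ht
      simp only [ht, Pi.zero_apply, mul_zero]
    have := hsep 0 hρ.zero_mem_posUnitBallL2
    rwa [integral_congr_ae h0, integral_zero'] at this
  have hwm : Measurable fun t => ENNReal.ofReal (w t) := measurable_ofReal_Lp w
  have hcc : ENNReal.ofReal c⁻¹ * ENNReal.ofReal c = 1 := by
    rw [← ENNReal.ofReal_mul (inv_nonneg.mpr hc.le), inv_mul_cancel₀ hc.ne', ENNReal.ofReal_one]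
  have hg : assoc ρ (fun t => ENNReal.ofReal c⁻¹ * ENNReal.ofReal (w t)) ≤ 1 :=
    (assoc_const_mul_le _ hwm).trans (hcc ▸ mul_le_mul_right (hρ.assoc_ofReal_le hsep) _)
  have hvw : ENNReal.ofReal c < ∫⁻ t in Ioo (0:ℝ) 1, v t * ENNReal.ofReal (w t) := by
    refine ((ENNReal.ofReal_lt_ofReal_iff (hc.trans hcx)).mpr hcx).trans_le ?_
    calc ENNReal.ofReal (∫ t, w t * x t ∂μ₀)
        = ENNReal.ofReal (∫ t, w t * (v t).toReal ∂μ₀) := by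
          rw [integral_congr_ae (hx.mono fun t ht => by simp only [ht] :
            (fun t => w t * x t) =ᵐ[μ₀] fun t => w t * (v t).toReal)]
      _ ≤ ∫⁻ t in Ioo (0:ℝ) 1, ENNReal.ofReal (w t * (v t).toReal) :=
          ofReal_integral_le_lintegral_ofReal _
      _ = ∫⁻ t in Ioo (0:ℝ) 1, v t * ENNReal.ofReal (w t) := lintegral_congr fun t => by
          rw [ENNReal.ofReal_mul' ENNReal.toReal_nonneg, hofReal, mul_comm]
  calc 1 = ENNReal.ofReal c⁻¹ * ENNReal.ofReal c := hcc.symm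
    _ < ENNReal.ofReal c⁻¹ * ∫⁻ t in Ioo (0:ℝ) 1, v t * ENNReal.ofReal (w t) :=
        (ENNReal.mul_lt_mul_iff_right (by simp [hc]) ENNReal.ofReal_ne_top).mpr hvw
    _ = ∫⁻ t in Ioo (0:ℝ) 1, v t * (ENNReal.ofReal c⁻¹ * ENNReal.ofReal (w t)) := by
        rw [← lintegral_const_mul _ (f := fun t => v t * ENNReal.ofReal (w t)) (hv.mul hwm)]
        exact lintegral_congr fun t => by ring
    _ ≤ assoc (assoc ρ) v := lintegral_mul_le_assoc (hwm.const_mul _) hg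

theorem IsRiNorm.le_assoc_assoc (hρ : IsRiNorm ρ) {u : ℝ → ℝ≥0∞} (hu : Measurable u) :
    ρ u ≤ assoc (assoc ρ) u := by
  have hbounded : ∀ {v : ℝ → ℝ≥0∞}, Measurable v → ∀ {B : ℝ≥0∞}, B ≠ ⊤ → (∀ t, v t ≤ B) →
      ρ v ≤ assoc (assoc ρ) v := by
    intro v hv B hB hvB
    refine le_of_forall_gt_imp_ge_of_dense fun c hc => ?_
    rcases eq_or_ne c ⊤ with rfl | hctop
    · exact le_top
    have hc0 : c ≠ 0 := (hc.trans_le' zero_le).ne'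
    have hscaled : ρ (fun t => c⁻¹ * v t) ≤ 1 := by
      refine not_lt.mp fun h => ?_
      refine (hρ.one_lt_assoc_assoc (hv.const_mul _) (ENNReal.mul_ne_top (by simpa) hB)
        (fun t => mul_le_mul_right (hvB t) _) h).not_ge ?_
      calc assoc (assoc ρ) (fun t => c⁻¹ * v t) ≤ c⁻¹ * assoc (assoc ρ) v :=
            assoc_const_mul_le _ hv
        _ ≤ c⁻¹ * c := mul_le_mul_right hc.le _
        _ = 1 := ENNReal.inv_mul_cancel hc0 hctop
    rw [← ENNReal.ofReal_toReal (ENNReal.inv_ne_top.mpr hc0)] at hscaled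
    rw [hρ.2.1 v hv _ ENNReal.toReal_nonneg, ENNReal.ofReal_toReal (ENNReal.inv_ne_top.mpr hc0),
      ENNReal.inv_mul_le_iff hc0 hctop, mul_one] at hscaled
    exact hscaled
  rw [← hρ.2.2.2.2.1 (fun N t => min (u t) (N : ℝ≥0∞)) u (fun N => hu.min measurable_const) hu
    (Eventually.of_forall fun t N M h => min_le_min le_rfl (Nat.cast_le.mpr h))
    (Eventually.of_forall fun t => iSup_min_natCast (u t))]
  exact iSup_le fun N => (hbounded (hu.min measurable_const) (ENNReal.natCast_ne_top N)
    fun t => min_le_right _ _).trans (assoc_mono fun t => min_le_left _ _)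

end LorentzLuxemburg

section HardyOperator

variable {I : ℝ → ℝ}

lemma HI_antitone (I : ℝ → ℝ) (f : ℝ → ℝ≥0∞) : Antitone (HI I f) :=
  fun _ _ hab => lintegral_mono' (Measure.restrict_mono (Ioo_subset_Ioo_left hab) le_rfl) le_rfl

lemma HI_eqOn_of_eqOn {J : ℝ → ℝ} {f g : ℝ → ℝ≥0∞} (hIJ : EqOn I J (Ioo (0:ℝ) 1))
    (hfg : EqOn f g (Ioo (0:ℝ) 1)) : EqOn (HI I f) (HI J g) (Ioo (0:ℝ) 1) := fun t ht =>
  setLIntegral_congr_fun measurableSet_Ioo fun s hs => by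
    have hs' : s ∈ Ioo (0:ℝ) 1 := ⟨ht.1.trans hs.1, hs.2⟩
    rw [hIJ hs', hfg hs']

lemma IsRiNorm.HI_congr {ρ : (ℝ → ℝ≥0∞) → ℝ≥0∞} (hρ : IsRiNorm ρ) {J : ℝ → ℝ}
    {f g : ℝ → ℝ≥0∞} (hIJ : EqOn I J (Ioo (0:ℝ) 1)) (hfg : EqOn f g (Ioo (0:ℝ) 1)) :
    ρ (HI I f) = ρ (HI J g) :=
  hρ.congr_ae (HI_antitone I f).measurable (HI_antitone J g).measurable <|
    (ae_restrict_mem measurableSet_Ioo).mono fun _ ht => HI_eqOn_of_eqOn hIJ hfg ht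

lemma TI_eqOn_of_eqOn {J : ℝ → ℝ} (hIJ : EqOn I J (Ioo (0:ℝ) 1)) (g : ℝ → ℝ≥0∞) :
    EqOn (TI I g) (TI J g) (Ioo (0:ℝ) 1) := fun t ht => by
  simp only [TI, hIJ ht]
  congr 1
  refine iSup_congr fun s => iSup_congr fun hs => ?_
  rw [hIJ ⟨ht.1.trans_le hs.1, hs.2⟩]

lemma setLIntegral_HI_mul_eq (hI : Measurable I) {f g : ℝ → ℝ≥0∞} (hf : Measurable f)
    (hg : Measurable g) :
    ∫⁻ t in Ioo (0:ℝ) 1, HI I f t * g t = ∫⁻ s in Ioo (0:ℝ) 1, f s * RI I g s := by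
  set F := fun s => f s / ENNReal.ofReal (I s)
  have hF : Measurable F := hf.div hI.ennreal_ofReal
  have hK : Measurable (Function.uncurry fun t s : ℝ => (if t < s then F s else 0) * g t) :=
    ((hF.comp measurable_snd).ite (measurableSet_lt measurable_fst measurable_snd)
      measurable_const).mul (hg.comp measurable_fst)
  calc ∫⁻ t in Ioo (0:ℝ) 1, HI I f t * g t
      = ∫⁻ t in Ioo (0:ℝ) 1, ∫⁻ s in Ioo (0:ℝ) 1, (if t < s then F s else 0) * g t := by
        refine setLIntegral_congr_fun measurableSet_Ioo fun t ht => ?_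
        rw [lintegral_mul_const _ ((hF.ite measurableSet_Ioi measurable_const)),
          show (fun s => if t < s then F s else 0) = (Ioi t).indicator F from rfl,
          lintegral_indicator measurableSet_Ioi, Measure.restrict_restrict measurableSet_Ioi,
          show Ioi t ∩ Ioo 0 1 = Ioo t 1 by
            ext s; simp only [mem_inter_iff, mem_Ioi, mem_Ioo]
            exact ⟨fun h => ⟨h.1, h.2.2⟩, fun h => ⟨h.1, ht.1.trans h.1, h.2⟩⟩]
        rfl
    _ = ∫⁻ s in Ioo (0:ℝ) 1, ∫⁻ t in Ioo (0:ℝ) 1, (if t < s then F s else 0) * g t :=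
        lintegral_lintegral_swap hK.aemeasurable
    _ = ∫⁻ s in Ioo (0:ℝ) 1, f s * RI I g s := by
        refine setLIntegral_congr_fun measurableSet_Ioo fun s hs => ?_
        have hsplit : ∀ t, (if t < s then F s else 0) * g t = F s * (Iio s).indicator g t :=
          fun t => by by_cases h : t < s <;> simp [indicator, h]
        simp_rw [hsplit]
        rw [lintegral_const_mul _ (hg.indicator measurableSet_Iio),
          lintegral_indicator measurableSet_Iio, Measure.restrict_restrict measurableSet_Iio,
          show Iio s ∩ Ioo 0 1 = Ioo 0 s by
            ext t; simp only [mem_inter_iff, mem_Iio, mem_Ioo]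
            exact ⟨fun h => ⟨h.2.1, h.1⟩, fun h => ⟨h.2, h.1, h.2.trans hs.2⟩⟩]
        simp only [F, RI, div_eq_mul_inv, mul_assoc]

end HardyOperator

section SupremumOperator

def StarCondWith (I : ℝ → ℝ) (C : ℝ) : Prop :=
  ∀ t ∈ Ioo (0:ℝ) 1, ∫⁻ s in Ioo (0:ℝ) t, ENNReal.ofReal (I s / s) ≤ ENNReal.ofReal (C * I t)

variable {I : ℝ → ℝ} {g : ℝ → ℝ≥0∞}

def tailSup (I : ℝ → ℝ) (g : ℝ → ℝ≥0∞) (t : ℝ) : ℝ≥0∞ :=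
  ⨆ s ∈ Ico t 1, ENNReal.ofReal (s / I s) * rearr g s

lemma tailSup_antitone : Antitone (tailSup I g) := fun _ _ hab =>
  biSup_mono fun _ hs => ⟨hab.trans hs.1, hs.2⟩

lemma measurable_TI (hI : Measurable I) : Measurable (TI I g) :=
  ((hI.div measurable_id).ennreal_ofReal).mul tailSup_antitone.measurable

lemma measurable_RI (hI : Measurable I) : Measurable (RI I g) :=
  hI.ennreal_ofReal.inv.mul (Monotone.measurable fun _ _ hab =>
    lintegral_mono' (Measure.restrict_mono (Ioo_subset_Ioo_right hab) le_rfl) le_rfl)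

lemma rearr_le_TI {t : ℝ} (ht : t ∈ Ioo (0:ℝ) 1) (hIt : 0 < I t) : rearr g t ≤ TI I g t := by
  calc rearr g t = ENNReal.ofReal (I t / t) * (ENNReal.ofReal (t / I t) * rearr g t) := by
        rw [← mul_assoc, ← ENNReal.ofReal_mul (div_nonneg hIt.le ht.1.le), div_mul_div_comm,
          mul_comm t, div_self (mul_pos hIt ht.1).ne', ENNReal.ofReal_one, one_mul]
    _ ≤ TI I g t := mul_le_mul_right (le_iSup₂ (f := fun s (_ : s ∈ Ico t 1) =>
        ENNReal.ofReal (s / I s) * rearr g s) t ⟨le_rfl, ht.2⟩) _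

lemma setLIntegral_Ico_TI_le (hI : Monotone I) {C : ℝ} (hstar : StarCondWith I C) {s σ : ℝ}
    (hs : 0 < s) (hσ : σ ∈ Ioo (0:ℝ) 1) :
    ∫⁻ τ in Ico s σ, TI I g τ ≤ ENNReal.ofReal (C * I σ) * tailSup I g s :=
  calc ∫⁻ τ in Ico s σ, TI I g τ
      ≤ ∫⁻ τ in Ico s σ, ENNReal.ofReal (I τ / τ) * tailSup I g s :=
        setLIntegral_mono' measurableSet_Ico fun τ hτ =>
          mul_le_mul_right (tailSup_antitone hτ.1) _
    _ ≤ (∫⁻ τ in Ioo (0:ℝ) σ, ENNReal.ofReal (I τ / τ)) * tailSup I g s := by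
        rw [lintegral_mul_const _ (f := fun τ => ENNReal.ofReal (I τ / τ))
          (hI.measurable.div measurable_id).ennreal_ofReal]
        exact mul_le_mul_left (lintegral_mono' (Measure.restrict_mono
          (Ico_subset_Ioo_left hs) le_rfl) le_rfl) _
    _ ≤ ENNReal.ofReal (C * I σ) * tailSup I g s := mul_le_mul_left (hstar σ hσ) _

variable (hIpos : ∀ s ∈ Ioo (0:ℝ) 1, 0 < I s)
include hIpos

lemma RI_le_RI_TI (hg : Measurable g) {s : ℝ} (hs : s ∈ Ioo (0:ℝ) 1) :
    RI I g s ≤ RI I (TI I g) s :=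
  mul_le_mul_right ((setLIntegral_Ioo_le_setLIntegral_rearr hg hs.2.le).trans
    (setLIntegral_mono' measurableSet_Ioo fun τ hτ =>
      rearr_le_TI ⟨hτ.1, hτ.2.trans hs.2⟩ (hIpos τ ⟨hτ.1, hτ.2.trans hs.2⟩))) _

lemma ofReal_mul_tailSup_le (hratio : AntitoneOn (fun t => I t / t) (Ioo (0:ℝ) 1)) {s : ℝ}
    (hs : s ∈ Ioo (0:ℝ) 1) :
    ENNReal.ofReal (I s) * tailSup I g s ≤ ∫⁻ τ in Ioo (0:ℝ) s, TI I g τ :=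
  calc ENNReal.ofReal (I s) * tailSup I g s
      = ∫⁻ _ in Ioo (0:ℝ) s, ENNReal.ofReal (I s / s) * tailSup I g s := by
        rw [setLIntegral_const, Real.volume_Ioo, sub_zero, mul_right_comm,
          ← ENNReal.ofReal_mul (div_nonneg (hIpos s hs).le hs.1.le), div_mul_cancel₀ _ hs.1.ne']
    _ ≤ ∫⁻ τ in Ioo (0:ℝ) s, TI I g τ := setLIntegral_mono' measurableSet_Ioo fun τ hτ =>
        mul_le_mul' (ENNReal.ofReal_le_ofReal (hratio ⟨hτ.1, hτ.2.trans hs.2⟩ hs hτ.2.le))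
          (tailSup_antitone hτ.2.le)

lemma RI_TI_le_mul (hI : Monotone I) (hratio : AntitoneOn (fun t => I t / t) (Ioo (0:ℝ) 1))
    {C : ℝ} (hC : 0 ≤ C) (hstar : StarCondWith I C) {s σ : ℝ} (hs : s ∈ Ioo (0:ℝ) 1)
    (hσ : σ ∈ Ioo (0:ℝ) 1) (hsσ : s ≤ σ) :
    RI I (TI I g) σ ≤ ENNReal.ofReal (1 + C) * RI I (TI I g) s := by
  have hIs : ENNReal.ofReal (I s) ≠ 0 := (ENNReal.ofReal_pos.mpr (hIpos s hs)).ne'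
  have hIσ : ENNReal.ofReal (I σ) ≠ 0 := (ENNReal.ofReal_pos.mpr (hIpos σ hσ)).ne'
  have hsup : tailSup I g s ≤ RI I (TI I g) s :=
    (ENNReal.mul_le_iff_le_inv hIs ENNReal.ofReal_ne_top).mp (ofReal_mul_tailSup_le hIpos hratio hs)
  have hsplit : ∫⁻ τ in Ioo (0:ℝ) σ, TI I g τ
      = (∫⁻ τ in Ioo (0:ℝ) s, TI I g τ) + ∫⁻ τ in Ico s σ, TI I g τ := by
    rw [← Ioo_union_Ico_eq_Ioo hs.1 hsσ, lintegral_union measurableSet_Ico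
      (disjoint_left.mpr fun _ h₁ h₂ => h₁.2.not_ge h₂.1)]
  have htail := setLIntegral_Ico_TI_le (g := g) hI hstar hs.1 hσ
  calc RI I (TI I g) σ
      = (ENNReal.ofReal (I σ))⁻¹
          * ((∫⁻ τ in Ioo (0:ℝ) s, TI I g τ) + ∫⁻ τ in Ico s σ, TI I g τ) := by
        rw [RI, hsplit]
    _ ≤ (ENNReal.ofReal (I σ))⁻¹ * (∫⁻ τ in Ioo (0:ℝ) s, TI I g τ)
        + (ENNReal.ofReal (I σ))⁻¹ * (ENNReal.ofReal (C * I σ) * tailSup I g s) := by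
        rw [← mul_add]
        exact mul_le_mul_right (add_le_add_right htail _) _
    _ ≤ RI I (TI I g) s + ENNReal.ofReal C * RI I (TI I g) s := by
        refine add_le_add (mul_le_mul_left (ENNReal.inv_le_inv.mpr
          (ENNReal.ofReal_le_ofReal (hI hsσ))) _) ?_
        rw [ENNReal.ofReal_mul hC, mul_comm (ENNReal.ofReal C), ← mul_assoc, ← mul_assoc,
          ENNReal.inv_mul_cancel hIσ ENNReal.ofReal_ne_top, one_mul]
        exact mul_le_mul_right hsup _
    _ = ENNReal.ofReal (1 + C) * RI I (TI I g) s := by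
        rw [ENNReal.ofReal_add zero_le_one hC, ENNReal.ofReal_one, add_mul, one_mul]

end SupremumOperator

section MainEstimate

variable {I : ℝ → ℝ} (hI : Monotone I) (hIpos : ∀ s ∈ Ioo (0:ℝ) 1, 0 < I s)
  (hratio : AntitoneOn (fun t => I t / t) (Ioo (0:ℝ) 1)) {C : ℝ} (hC : 0 ≤ C)
  (hstar : StarCondWith I C)
include hI hIpos hratio hC hstar

lemma setLIntegral_HI_mul_le {f g : ℝ → ℝ≥0∞} (hf : Measurable f) (hg : Measurable g) :
    ∫⁻ t in Ioo (0:ℝ) 1, HI I f t * g t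
      ≤ 2 * ENNReal.ofReal (1 + C) * ∫⁻ t in Ioo (0:ℝ) 1, HI I (rearr f) t * TI I g t := by
  have hR : Measurable (RI I (TI I g)) := measurable_RI hI.measurable
  calc ∫⁻ t in Ioo (0:ℝ) 1, HI I f t * g t
      = ∫⁻ t in Ioo (0:ℝ) 1, f t * RI I g t := setLIntegral_HI_mul_eq hI.measurable hf hg
    _ ≤ ∫⁻ t in Ioo (0:ℝ) 1, rearr f t * rearr (RI I g) t :=
        lintegral_mul_le_lintegral_rearr_mul_rearr hf (measurable_RI hI.measurable)
    _ ≤ ∫⁻ t in Ioo (0:ℝ) 1, rearr f t * (ENNReal.ofReal (1 + C) * RI I (TI I g) (t / 2)) :=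
        setLIntegral_mono' measurableSet_Ioo fun t ht => mul_le_mul_right
          ((rearr_le_rearr (fun s hs => RI_le_RI_TI hIpos hg hs) t).trans
            (rearr_le_mul_comp_half (fun s hs σ hσ hsσ =>
              RI_TI_le_mul hIpos hI hratio hC hstar hs hσ hsσ) ht)) _
    _ = ENNReal.ofReal (1 + C) * ∫⁻ t in Ioo (0:ℝ) 1, rearr f t * RI I (TI I g) (t / 2) := by
        rw [← lintegral_const_mul _ (f := fun t => rearr f t * RI I (TI I g) (t / 2))
          ((measurable_rearr f).mul (hR.comp (measurable_id.div_const 2)))]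
        exact lintegral_congr fun t => by ring
    _ ≤ ENNReal.ofReal (1 + C) * (2 * ∫⁻ t in Ioo (0:ℝ) 1, rearr f t * RI I (TI I g) t) :=
        mul_le_mul_right (setLIntegral_mul_comp_half_le (rearr_antitone f) hR) _
    _ = 2 * ENNReal.ofReal (1 + C) * ∫⁻ t in Ioo (0:ℝ) 1, HI I (rearr f) t * TI I g t := by
        rw [setLIntegral_HI_mul_eq hI.measurable (measurable_rearr f)
          (measurable_TI hI.measurable)]
        ring

theorem IsRiNorm.HI_le_mul_HI_rearr {ρ : (ℝ → ℝ≥0∞) → ℝ≥0∞} (hρ : IsRiNorm ρ) {C₀ : ℝ≥0∞}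
    (hT : ∀ g : ℝ → ℝ≥0∞, Measurable g → assoc ρ (TI I g) ≤ C₀ * assoc ρ g)
    {f : ℝ → ℝ≥0∞} (hf : Measurable f) :
    ρ (HI I f) ≤ 2 * ENNReal.ofReal (1 + C) * C₀ * ρ (HI I (rearr f)) := by
  refine (hρ.le_assoc_assoc (HI_antitone I f).measurable).trans (iSup₂_le fun g hg => ?_)
  calc ∫⁻ t in Ioo (0:ℝ) 1, HI I f t * g t
      ≤ 2 * ENNReal.ofReal (1 + C) * ∫⁻ t in Ioo (0:ℝ) 1, HI I (rearr f) t * TI I g t :=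
        setLIntegral_HI_mul_le hI hIpos hratio hC hstar hf hg.1
    _ ≤ 2 * ENNReal.ofReal (1 + C) * (ρ (HI I (rearr f)) * (C₀ * 1)) := by
        refine mul_le_mul_right ((hρ.lintegral_mul_le (HI_antitone I _).measurable
          (measurable_TI hI.measurable)).trans (mul_le_mul_right ?_ _)) _
        exact (hT g hg.1).trans (mul_le_mul_right hg.2 _)
    _ = 2 * ENNReal.ofReal (1 + C) * C₀ * ρ (HI I (rearr f)) := by ring

end MainEstimate

section Quasiconcave

variable {I : ℝ → ℝ}

lemma Quasiconcave.pos (hqc : Quasiconcave I) {s : ℝ} (hs : s ∈ Ioo (0:ℝ) 1) : 0 < I s :=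
  (hqc.1.mapsTo hs).1

lemma Quasiconcave.exists_monotone_eqOn (hqc : Quasiconcave I) :
    ∃ J : ℝ → ℝ, Monotone J ∧ EqOn I J (Ioo (0:ℝ) 1) :=
  hqc.2.1.exists_monotone_extension ⟨0, forall_mem_image.mpr fun _ hs => (hqc.pos hs).le⟩
    ⟨1, forall_mem_image.mpr fun _ hs => (hqc.1.mapsTo hs).2.le⟩

theorem Quasiconcave.HI_le_mul_HI_rearr (hqc : Quasiconcave I) {C : ℝ} (hC : 0 ≤ C)
    (hstar : StarCondWith I C) {ρ : (ℝ → ℝ≥0∞) → ℝ≥0∞} (hρ : IsRiNorm ρ) {C₀ : ℝ≥0∞}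
    (hT : ∀ g : ℝ → ℝ≥0∞, Measurable g → assoc ρ (TI I g) ≤ C₀ * assoc ρ g)
    {f : ℝ → ℝ≥0∞} (hf : Measurable f) :
    ρ (HI I f) ≤ 2 * ENNReal.ofReal (1 + C) * C₀ * ρ (HI I (rearr f)) := by
  -- `I` is arbitrary off `(0,1)`; a monotone extension makes all the integrands measurable
  obtain ⟨J, hJ, hIJ⟩ := hqc.exists_monotone_eqOn
  rw [hρ.HI_congr hIJ (eqOn_refl _ _), hρ.HI_congr hIJ (eqOn_refl _ _)]
  refine hρ.HI_le_mul_HI_rearr hJ (fun s hs => hIJ hs ▸ hqc.pos hs)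
    (hqc.2.2.1.congr fun t ht => by simp only [hIJ ht]) hC (fun t ht => ?_)
    (fun g hg => (assoc_congr (TI_eqOn_of_eqOn hIJ g)).symm.trans_le (hT g hg)) hf
  rw [← hIJ ht]
  refine le_of_eq_of_le (setLIntegral_congr_fun measurableSet_Ioo fun s hs => ?_) (hstar t ht)
  rw [hIJ ⟨hs.1, hs.2.trans ht.2⟩]

end Quasiconcave

lemma HI_rearr_le_optDomainNorm (I : ℝ → ℝ) (ρ : (ℝ → ℝ≥0∞) → ℝ≥0∞) (f : ℝ → ℝ≥0∞) :
    ρ (HI I (rearr f)) ≤ optDomainNorm I ρ f :=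
  le_iSup₂ (f := fun (h : ℝ → ℝ≥0∞)
    (_ : Measurable h ∧ ∀ t ∈ Ioo (0:ℝ) 1, rearr h t = rearr f t) => ρ (HI I h))
    (rearr f) ⟨measurable_rearr f, fun _ ht => rearr_rearr f ht⟩

lemma IsRiNorm.optDomainNorm_le {I : ℝ → ℝ} {ρ : (ℝ → ℝ≥0∞) → ℝ≥0∞} (hρ : IsRiNorm ρ)
    {K : ℝ≥0∞} (hK : ∀ h : ℝ → ℝ≥0∞, Measurable h → ρ (HI I h) ≤ K * ρ (HI I (rearr h)))
    (f : ℝ → ℝ≥0∞) : optDomainNorm I ρ f ≤ K * ρ (HI I (rearr f)) :=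
  iSup₂_le fun h hh => (hK h hh.1).trans_eq (by rw [hρ.HI_congr (eqOn_refl _ _) hh.2])

theorem statement17_general (I : ℝ → ℝ) (hqc : Quasiconcave I) (hstar : StarCond I)
    (ρ : (ℝ → ℝ≥0∞) → ℝ≥0∞) (hρ : IsRiNorm ρ)
    (C₀ : ℝ) (hC₀ : 0 < C₀)
    (hT : ∀ g : ℝ → ℝ≥0∞, Measurable g →
      assoc ρ (TI I g) ≤ ENNReal.ofReal C₀ * assoc ρ g) :
    (∃ C : ℝ, 0 < C ∧ ∀ f : ℝ → ℝ≥0∞, Measurable f →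
        ρ (HI I f) ≤ ENNReal.ofReal C * ρ (HI I (rearr f))) ∧
    (∃ c₁ c₂ : ℝ, 0 < c₁ ∧ 0 < c₂ ∧ ∀ f : ℝ → ℝ≥0∞, Measurable f →
        ENNReal.ofReal c₁ * optDomainNorm I ρ f ≤ ρ (HI I (rearr f)) ∧
          ρ (HI I (rearr f)) ≤ ENNReal.ofReal c₂ * optDomainNorm I ρ f) := by
  obtain ⟨C, hC, hstar⟩ := hstar
  set K := 2 * (1 + C) * C₀
  have hK : 0 < K := by positivity
  have hbound : ∀ f : ℝ → ℝ≥0∞, Measurable f →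
      ρ (HI I f) ≤ ENNReal.ofReal K * ρ (HI I (rearr f)) := fun f hf => by
    convert hqc.HI_le_mul_HI_rearr hC.le hstar hρ hT hf using 2
    rw [ENNReal.ofReal_mul (by positivity), ENNReal.ofReal_mul zero_le_two, ENNReal.ofReal_ofNat]
  refine ⟨⟨K, hK, hbound⟩, K⁻¹, 1, inv_pos.mpr hK, one_pos, fun f _ => ⟨?_, ?_⟩⟩
  · calc ENNReal.ofReal K⁻¹ * optDomainNorm I ρ f
        ≤ ENNReal.ofReal K⁻¹ * (ENNReal.ofReal K * ρ (HI I (rearr f))) :=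
          mul_le_mul_right (hρ.optDomainNorm_le hbound f) _
      _ = ρ (HI I (rearr f)) := by
          rw [← mul_assoc, ← ENNReal.ofReal_mul (inv_pos.mpr hK).le, inv_mul_cancel₀ hK.ne',
            ENNReal.ofReal_one, one_mul]
  · simpa using HI_rearr_le_optDomainNorm I ρ f

/-- Theorem 4.14 / `thm:hvezdickadomeny`.  For quasiconcave `I` satisfying
(★) and an r.i. norm `‖·‖_Y` with `H_I 1 ∈ Y` and `T_I` bounded on `Y'`, one has
`‖H_I f‖_Y ≲ ‖H_I f^*‖_Y`, and consequently
`‖f‖_{X_Y} = sup_{h ∼ f} ‖H_I h‖_Y ≈ ‖H_I f^*‖_Y`. -/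
theorem statement17 (I : ℝ → ℝ) (hqc : Quasiconcave I) (hstar : StarCond I)
    (ρ : (ℝ → ℝ≥0∞) → ℝ≥0∞) (hρ : IsRiNorm ρ)
    (hH1 : ρ (HI I (fun _ => 1)) < ⊤)
    (C₀ : ℝ) (hC₀ : 0 < C₀)
    (hT : ∀ g : ℝ → ℝ≥0∞, Measurable g →
      assoc ρ (TI I g) ≤ ENNReal.ofReal C₀ * assoc ρ g) :
    (∃ C : ℝ, 0 < C ∧ ∀ f : ℝ → ℝ≥0∞, Measurable f →
        ρ (HI I f) ≤ ENNReal.ofReal C * ρ (HI I (rearr f))) ∧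
    (∃ c₁ c₂ : ℝ, 0 < c₁ ∧ 0 < c₂ ∧ ∀ f : ℝ → ℝ≥0∞, Measurable f →
        ENNReal.ofReal c₁ * optDomainNorm I ρ f ≤ ρ (HI I (rearr f)) ∧
          ρ (HI I (rearr f)) ≤ ENNReal.ofReal c₂ * optDomainNorm I ρ f) :=
  statement17_general I hqc hstar ρ hρ C₀ hC₀ hT
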